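/- arXiv:2410.02935 — 3 statements merged into one kernel-verified Lean document; each statement's English description precedes it below -/
import Mathlib

section
/- For every dimension d ≥ 1, r^SS(2) = 4; that is, 4 is the smallest natural number r such that the Softmax–Softmax polynomial system of order r with m = 2 blocks admits no non-trivial solution. -/
/-!
Softmax–Softmax polynomial system: for every dimension `d ≥ 1`, `r^SS(2) = 4`,
i.e. 4 is the smallest natural number `r` such that the system of order `r`
with `m = 2` blocks admits no non-trivial solution.
-/

noncomputable section

/-- Multi-index `v ^ α := ∏ j, v j ^ α j`. -/
def mpow {d : ℕ} (v : Fin d → ℝ) (α : Fin d → ℕ) : ℝ := ∏ j, v j ^ α j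

/-- Multi-index factorial `α! := ∏ j, (α j)!`. -/
def mfact {d : ℕ} (α : Fin d → ℕ) : ℕ := ∏ j, Nat.factorial (α j)

/-- Multi-index degree `|α| := ∑ j, α j`. -/
def mdeg {d : ℕ} (α : Fin d → ℕ) : ℕ := ∑ j, α j

/-- A finite box containing every multi-index `α ≤ ρ` (coordinatewise). -/
def mIdxBox {d : ℕ} (ρ : Fin d → ℕ) : Finset (Fin d → ℕ) :=
  Fintype.piFinset fun j => Finset.range (ρ j + 1)

/-- Left-hand side of the Softmax–Softmax polynomial equation indexed by `(ρ₁, ρ₂)`: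
`∑ i ∑_{α₁+α₂+α₃=ρ₁, |α₃|+α₄+2α₅=ρ₂} p_i² q_{1i}^{α₁} q₂^{α₂} q_{3i}^{α₃} q_{4i}^{α₄} q_{5i}^{α₅}
  / (α₁! α₂! α₃! α₄! α₅!)`. -/
def ssLHS {m d : ℕ} (p : Fin m → ℝ) (q1 : Fin m → Fin d → ℝ) (q2 : Fin d → ℝ)
    (q3 : Fin m → Fin d → ℝ) (q4 q5 : Fin m → ℝ) (ρ1 : Fin d → ℕ) (ρ2 : ℕ) : ℝ :=
  ∑ i : Fin m, ∑ α1 ∈ mIdxBox ρ1, ∑ α2 ∈ mIdxBox ρ1, ∑ α3 ∈ mIdxBox ρ1,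
    ∑ α4 ∈ Finset.range (ρ2 + 1), ∑ α5 ∈ Finset.range (ρ2 + 1),
      if α1 + α2 + α3 = ρ1 ∧ mdeg α3 + α4 + 2 * α5 = ρ2 then
        (1 / ((mfact α1 : ℝ) * (mfact α2 : ℝ) * (mfact α3 : ℝ) *
            (Nat.factorial α4 : ℝ) * (Nat.factorial α5 : ℝ))) *
          p i ^ 2 * mpow (q1 i) α1 * mpow q2 α2 * mpow (q3 i) α3 *
          q4 i ^ α4 * q5 i ^ α5
      else 0

/-- The Softmax–Softmax system of order `r` (with `m` blocks, in dimension `d`)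
admits a non-trivial solution: all `p_i ≠ 0`, some `q_{4i} ≠ 0`, and every equation
indexed by `(ρ₁, ρ₂)` with `1 ≤ |ρ₁| + ρ₂ ≤ r` holds. -/
def ssHasNontrivial (m d r : ℕ) : Prop :=
  ∃ (p : Fin m → ℝ) (q1 : Fin m → Fin d → ℝ) (q2 : Fin d → ℝ)
    (q3 : Fin m → Fin d → ℝ) (q4 q5 : Fin m → ℝ),
      (∀ i, p i ≠ 0) ∧ (∃ i, q4 i ≠ 0) ∧
      ∀ (ρ1 : Fin d → ℕ) (ρ2 : ℕ), 1 ≤ mdeg ρ1 + ρ2 → mdeg ρ1 + ρ2 ≤ r →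
        ssLHS p q1 q2 q3 q4 q5 ρ1 ρ2 = 0

lemma mIdxBox_zero {d : ℕ} : mIdxBox (fun _ : Fin d => 0) = {fun _ => 0} := by
  ext f
  simp [mIdxBox, Fintype.mem_piFinset, Nat.lt_one_iff, funext_iff]

lemma mpow_zero_exp {d : ℕ} (v : Fin d → ℝ) : mpow v (fun _ => 0) = 1 := by
  simp [mpow]

lemma mfact_zero {d : ℕ} : mfact (fun _ : Fin d => 0) = 1 := by simp [mfact]

lemma mdeg_zero {d : ℕ} : mdeg (fun _ : Fin d => 0) = 0 := by simp [mdeg]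

lemma ssLHS_rho1_zero {m d : ℕ} (p : Fin m → ℝ) (q1 : Fin m → Fin d → ℝ) (q2 : Fin d → ℝ)
    (q3 : Fin m → Fin d → ℝ) (q4 q5 : Fin m → ℝ) (k : ℕ) :
    ssLHS p q1 q2 q3 q4 q5 (fun _ => 0) k =
    ∑ i : Fin m, ∑ α4 ∈ Finset.range (k+1), ∑ α5 ∈ Finset.range (k+1),
      if α4 + 2*α5 = k then
        (1/((Nat.factorial α4 : ℝ) * (Nat.factorial α5 : ℝ))) * p i^2 * q4 i^α4 * q5 i^α5
      else 0 := by
  unfold ssLHS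
  rw [mIdxBox_zero]
  simp only [Finset.sum_singleton, mpow_zero_exp, mfact_zero, mdeg_zero, Nat.cast_one]
  refine Finset.sum_congr rfl fun i _ => Finset.sum_congr rfl fun α4 _ =>
    Finset.sum_congr rfl fun α5 _ => ?_
  have h0 : ((fun _ : Fin d => 0) + (fun _ => 0) + (fun _ => 0) : Fin d → ℕ) = fun _ => 0 := by
    funext j; simp
  rw [h0]
  simp only [true_and, zero_add]
  split <;> ring

lemma mpow_zero_fun {d : ℕ} {α : Fin d → ℕ} {j : Fin d} (hj : α j ≠ 0) :
    mpow (fun _ => (0:ℝ)) α = 0 := by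
  apply Finset.prod_eq_zero (Finset.mem_univ j)
  exact zero_pow hj

lemma ssLHS_q_zero {m d : ℕ} (p q4 q5 : Fin m → ℝ) (ρ1 : Fin d → ℕ) (ρ2 : ℕ)
    (hρ : ρ1 ≠ fun _ => 0) :
    ssLHS p (fun _ _ => 0) (fun _ => 0) (fun _ _ => 0) q4 q5 ρ1 ρ2 = 0 := by
  have hj : ∃ j, ρ1 j ≠ 0 := by
    by_contra h
    push_neg at h
    exact hρ (funext h)
  obtain ⟨j, hj⟩ := hj
  refine Finset.sum_eq_zero fun i _ => Finset.sum_eq_zero fun α1 _ =>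
    Finset.sum_eq_zero fun α2 _ => Finset.sum_eq_zero fun α3 _ =>
    Finset.sum_eq_zero fun α4 _ => Finset.sum_eq_zero fun α5 _ => ?_
  split
  case isTrue h =>
    obtain ⟨hsum, -⟩ := h
    have hjj : α1 j + α2 j + α3 j = ρ1 j := congrFun hsum j
    have : α1 j ≠ 0 ∨ α2 j ≠ 0 ∨ α3 j ≠ 0 := by omega
    rcases this with h' | h' | h'
    · rw [mpow_zero_fun h']; ring
    · rw [mpow_zero_fun h']; ring
    · rw [mpow_zero_fun h']; ring
  case isFalse => rfl

lemma key_alg (a b u w v z : ℝ) (ha : 0 < a) (hb : 0 < b)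
    (h1 : a*u + b*w = 0)
    (h2 : a*(u^2/2 + v) + b*(w^2/2 + z) = 0)
    (h3 : a*(u^3/6 + u*v) + b*(w^3/6 + w*z) = 0)
    (h4 : a*(u^4/24 + u^2*v/2 + v^2/2) + b*(w^4/24 + w^2*z/2 + z^2/2) = 0) :
    u = 0 ∧ w = 0 := by
  by_contra hc
  have hu : u ≠ 0 := by
    rintro rfl
    have hw : w = 0 := by
      have : b * w = 0 := by linarith
      rcases mul_eq_zero.1 this with h | h
      · exact absurd h (ne_of_gt hb)
      · exact h
    exact hc ⟨rfl, hw⟩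
  have hw : w ≠ 0 := by
    rintro rfl
    have : a * u = 0 := by linarith
    rcases mul_eq_zero.1 this with h | h
    · exact absurd h (ne_of_gt ha)
    · exact hu h
  have huw : u * w < 0 := by
    have h1' : a * (u*w) = -(b * w^2) := by linear_combination w*h1
    have : a * (u*w) < 0 := by
      rw [h1']
      have : 0 < b * w^2 := mul_pos hb (by positivity)
      linarith
    nlinarith
  have hune : u - w ≠ 0 := by
    intro h
    have : u = w := by linarith
    rw [this] at huw
    nlinarith
  have hz0 : b*(u-w)*(z - w*(2*u-w)/6) = 0 := by
    linear_combination u*h2 - h3 - (u^2/3)*h1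
  have hz : z = w*(2*u-w)/6 := by
    rcases mul_eq_zero.1 hz0 with h | h
    · rcases mul_eq_zero.1 h with h' | h'
      · exact absurd h' (ne_of_gt hb)
      · exact absurd h' hune
    · linarith
  have hv0 : a*(w-u)*(v - u*(2*w-u)/6) = 0 := by
    linear_combination w*h2 - h3 - (w^2/3)*h1
  have hv : v = u*(2*w-u)/6 := by
    rcases mul_eq_zero.1 hv0 with h | h
    · rcases mul_eq_zero.1 h with h' | h'
      · exact absurd h' (ne_of_gt ha)
      · exact absurd (by linarith : u - w = 0) hune
    · linarith
  subst hv hz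
  have h5 : a*(u*w)*((u-w)*(u^2-u*w+w^2)) = 0 := by
    linear_combination (-36*w)*h4 + (w^2*(2*u^2+4*u*w-w^2))*h1
  have hfac : u^2 - u*w + w^2 > 0 := by nlinarith [sq_nonneg u, sq_nonneg w]
  have : a*(u*w)*((u-w)*(u^2-u*w+w^2)) ≠ 0 := by
    apply mul_ne_zero
    · exact mul_ne_zero (ne_of_gt ha) (ne_of_lt huw)
    · exact mul_ne_zero hune (ne_of_gt hfac)
  exact this h5

lemma mdeg_eq_zero_iff {d : ℕ} {ρ : Fin d → ℕ} : mdeg ρ = 0 ↔ ρ = fun _ => 0 := by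
  constructor
  · intro h
    funext j
    have := Finset.sum_eq_zero_iff.1 h j (Finset.mem_univ j)
    exact this
  · rintro rfl; exact mdeg_zero

/-- `r^SS(2) = 4` for every `d ≥ 1`: `4` is the least `r` for which the
Softmax–Softmax system of order `r` with `m = 2` blocks has no non-trivial solution. -/
theorem rSS_two_eq_four (d : ℕ) (hd : 1 ≤ d) :
    IsLeast {r : ℕ | ¬ ssHasNontrivial 2 d r} 4 := by
  constructor
  · -- no nontrivial solution at order 4
    rintro ⟨p, q1, q2, q3, q4, q5, hp, ⟨i0, hi0⟩, heq⟩
    have hmd : mdeg (fun _ : Fin d => 0) = 0 := mdeg_zero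
    have e1 := heq (fun _ => 0) 1 (by omega) (by omega)
    have e2 := heq (fun _ => 0) 2 (by omega) (by omega)
    have e3 := heq (fun _ => 0) 3 (by omega) (by omega)
    have e4 := heq (fun _ => 0) 4 (by omega) (by omega)
    rw [ssLHS_rho1_zero] at e1 e2 e3 e4
    simp only [Finset.sum_range_succ, Finset.sum_range_zero, Fin.sum_univ_two] at e1 e2 e3 e4
    norm_num [Nat.factorial] at e1 e2 e3 e4
    have ha : 0 < (p 0)^2 := (sq_nonneg (p 0)).lt_of_ne (Ne.symm (pow_ne_zero 2 (hp 0)))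
    have hb : 0 < (p 1)^2 := (sq_nonneg (p 1)).lt_of_ne (Ne.symm (pow_ne_zero 2 (hp 1)))
    have := key_alg ((p 0)^2) ((p 1)^2) (q4 0) (q4 1) (q5 0) (q5 1) ha hb
      (by linarith) (by linarith) (by linarith) (by linarith)
    fin_cases i0
    · exact hi0 this.1
    · exact hi0 this.2
  · -- order 3 admits a nontrivial solution
    intro r hr
    by_contra hlt
    push_neg at hlt
    have hr3 : r ≤ 3 := by omega
    apply hr
    refine ⟨![1, 1], fun _ _ => 0, fun _ => 0, fun _ _ => 0, ![1, -1], ![-1/2, -1/2],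
      ?_, ⟨0, by norm_num⟩, ?_⟩
    · intro i; fin_cases i <;> norm_num
    · intro ρ1 ρ2 hge hle
      by_cases hρ : ρ1 = fun _ => 0
      · subst hρ
        rw [ssLHS_rho1_zero]
        rw [mdeg_zero] at hge hle
        have : ρ2 = 1 ∨ ρ2 = 2 ∨ ρ2 = 3 := by omega
        rcases this with rfl | rfl | rfl <;>
          · simp only [Finset.sum_range_succ, Finset.sum_range_zero, Fin.sum_univ_two]
            norm_num [Nat.factorial]
      · exact ssLHS_q_zero _ _ _ _ _ hρ
end
end

section
/- For every fixed dimension d ≥ 1, the function m ↦ r^SS(m) is monotonically increasing: if 2 ≤ m ≤ m', then r^SS(m) ≤ r^SS(m'). -/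
/-!
Splitting a block into `k` blocks with the same parameters and weight `p / √k` leaves every
equation unchanged, since the equations are linear in the `p i ^ 2`; so a non-trivial solution
with `m` blocks gives one with any `m' ≥ m` blocks, and it remains to see that `r^SS(m')` is the
infimum of a nonempty set. The equations with `ρ₁ = 0` say that
`∑ i, p i ^ 2 * exp (q₄ᵢ t + q₅ᵢ t²)` is constant modulo `t ^ (r + 1)`. After grouping equal pairs
`(q₄ᵢ, q₅ᵢ)` this is a relation, modulo a power of `t`, between finitely many distinct series
`exp (a t + b t²)` with nonzero coefficient at some `(a, b) ≠ 0`. The twisted derivative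
`F ↦ F' - (a₀ + 2 b₀ t) F` sends `w · exp (a t + b t²)` to `w₁ · exp (a t + b t²)` with
`w₁ = w' + ((a - a₀) + 2 (b - b₀) t) w`: applied `deg w + 1` times it kills the term at
`(a₀, b₀)` and keeps every other polynomial factor nonzero, so induction on the number of pairs
shows that no such relation survives once `r` is large.
-/

noncomputable section

/-- `r^SS(m)`: the smallest `r` such that the Softmax–Softmax system of order `r`
with `m` blocks (in dimension `d`) admits no non-trivial solution. -/
def rSS (m d : ℕ) : ℕ := sInf {r : ℕ | ¬ ssHasNontrivial m d r}

open Finset PowerSeries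

theorem Finset.sum_comp_div_card_fiber {ι κ K : Type*} [Fintype ι] [Fintype κ] [DecidableEq κ]
    [Semifield K] [CharZero K] {σ : ι → κ} (hσ : Function.Surjective σ) (f : κ → K) :
    ∑ i, f (σ i) / #{j | σ j = σ i} = ∑ k, f k := by
  rw [← Finset.sum_fiberwise univ σ]
  refine Finset.sum_congr rfl fun k _ => ?_
  have hk : (#{j | σ j = k} : K) ≠ 0 := by
    obtain ⟨i, rfl⟩ := hσ k
    exact Nat.cast_ne_zero.mpr (Finset.card_ne_zero.mpr ⟨i, by simp⟩)
  rw [Finset.sum_congr rfl fun i hi => by rw [(Finset.mem_filter.mp hi).2], Finset.sum_const,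
    nsmul_eq_mul, mul_div_cancel₀ _ hk]

def ssTerm {d : ℕ} (Q1 Q2 Q3 : Fin d → ℝ) (Q4 Q5 : ℝ) (ρ1 : Fin d → ℕ) (ρ2 : ℕ) : ℝ :=
  ∑ α1 ∈ mIdxBox ρ1, ∑ α2 ∈ mIdxBox ρ1, ∑ α3 ∈ mIdxBox ρ1,
    ∑ α4 ∈ Finset.range (ρ2 + 1), ∑ α5 ∈ Finset.range (ρ2 + 1),
      if α1 + α2 + α3 = ρ1 ∧ mdeg α3 + α4 + 2 * α5 = ρ2 then
        (1 / ((mfact α1 : ℝ) * (mfact α2 : ℝ) * (mfact α3 : ℝ) *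
            (Nat.factorial α4 : ℝ) * (Nat.factorial α5 : ℝ))) *
          mpow Q1 α1 * mpow Q2 α2 * mpow Q3 α3 * Q4 ^ α4 * Q5 ^ α5
      else 0

theorem ssLHS_eq_sum_ssTerm {m d : ℕ} (p : Fin m → ℝ) (q1 : Fin m → Fin d → ℝ) (q2 : Fin d → ℝ)
    (q3 : Fin m → Fin d → ℝ) (q4 q5 : Fin m → ℝ) (ρ1 : Fin d → ℕ) (ρ2 : ℕ) :
    ssLHS p q1 q2 q3 q4 q5 ρ1 ρ2 =
      ∑ i, p i ^ 2 * ssTerm (q1 i) q2 (q3 i) (q4 i) (q5 i) ρ1 ρ2 := by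
  simp only [ssLHS, ssTerm, Finset.mul_sum, mul_ite, mul_zero]
  congr! 7
  ring

theorem ssHasNontrivial.of_le {m m' d r : ℕ} (h : ssHasNontrivial m d r) (hmm : m ≤ m') :
    ssHasNontrivial m' d r := by
  obtain ⟨p, q1, q2, q3, q4, q5, hp, ⟨i0, hi0⟩, heq⟩ := h
  have : Nonempty (Fin m) := ⟨i0⟩
  set σ : Fin m' → Fin m := Function.invFun (Fin.castLE hmm)
  have hσ : Function.Surjective σ := Function.invFun_surjective (Fin.castLE_injective hmm)
  have hfiber (i : Fin m') : (0 : ℝ) < #{j | σ j = σ i} :=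
    Nat.cast_pos.mpr (Finset.card_pos.mpr ⟨i, by simp⟩)
  refine ⟨fun i => p (σ i) / √(#{j | σ j = σ i} : ℝ), q1 ∘ σ, q2, q3 ∘ σ, q4 ∘ σ, q5 ∘ σ,
    fun i => div_ne_zero (hp _) (Real.sqrt_pos.mpr (hfiber i)).ne', ?_, fun ρ1 ρ2 h1 h2 => ?_⟩
  · obtain ⟨i, hi⟩ := hσ i0
    exact ⟨i, by simpa [hi] using hi0⟩
  · rw [← heq ρ1 ρ2 h1 h2, ssLHS_eq_sum_ssTerm, ssLHS_eq_sum_ssTerm,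
      ← Finset.sum_comp_div_card_fiber hσ]
    refine Finset.sum_congr rfl fun i _ => ?_
    rw [div_pow, Real.sq_sqrt (hfiber i).le]
    simp only [Function.comp_apply]
    ring

theorem PowerSeries.derivative_rescale {R : Type*} [CommRing R] (a : R) (f : R⟦X⟧) :
    d⁄dX R (rescale a f) = C a * rescale a (d⁄dX R f) := by
  ext n
  simp only [coeff_derivative, coeff_rescale, coeff_C_mul, pow_succ]
  ring

/-- The formal power series `exp (z.1 * X + z.2 * X ^ 2)`. -/
def gaussSeries (z : ℝ × ℝ) : ℝ⟦X⟧ :=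
  rescale z.1 (exp ℝ) * expand 2 two_ne_zero (rescale z.2 (exp ℝ))

def gaussRate (z : ℝ × ℝ) : Polynomial ℝ :=
  Polynomial.C (2 * z.2) * Polynomial.X + Polynomial.C z.1

theorem derivative_gaussSeries (z : ℝ × ℝ) :
    d⁄dX ℝ (gaussSeries z) = (gaussRate z : ℝ⟦X⟧) * gaussSeries z := by
  have hexp (a : ℝ) : d⁄dX ℝ (rescale a (exp ℝ)) = C a * rescale a (exp ℝ) := by
    rw [derivative_rescale, derivative_exp]
  have hexpand : d⁄dX ℝ (expand 2 two_ne_zero (rescale z.2 (exp ℝ))) =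
      C (2 * z.2) * X * expand 2 two_ne_zero (rescale z.2 (exp ℝ)) := by
    rw [expand_apply, derivative_subst (HasSubst.X_pow two_ne_zero), hexp,
      ← expand_apply 2 two_ne_zero, map_mul, expand_C, derivative_pow, derivative_X]
    simp only [map_mul, map_ofNat, expand_apply]
    ring
  rw [gaussSeries, Derivation.leibniz, hexp, hexpand, gaussRate]
  simp only [smul_eq_mul, Polynomial.coe_add, Polynomial.coe_mul, Polynomial.coe_C,
    Polynomial.coe_X]
  ring

theorem isUnit_gaussSeries (z : ℝ × ℝ) : IsUnit (gaussSeries z) :=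
  ((isUnit_exp ℝ).map _).mul (((isUnit_exp ℝ).map _).map _)

@[simp]
theorem gaussSeries_zero : gaussSeries 0 = 1 := by
  simp [gaussSeries, constantCoeff_exp]

theorem coeff_gaussSeries (z : ℝ × ℝ) (n : ℕ) :
    coeff n (gaussSeries z) = ∑ i ∈ range (n + 1), ∑ k ∈ range (n + 1),
      if i + 2 * k = n then z.1 ^ i * z.2 ^ k / (i.factorial * k.factorial) else 0 := by
  rw [gaussSeries, coeff_mul,
    Finset.Nat.sum_antidiagonal_eq_sum_range_succ (fun i j => coeff i _ * coeff j _)]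
  refine Finset.sum_congr rfl fun i hi => ?_
  rw [Finset.sum_eq_single ((n - i) / 2)]
  · rw [Finset.mem_range] at hi
    simp only [coeff_expand, coeff_rescale, coeff_exp, one_div, map_inv₀, map_natCast]
    split_ifs <;> first | omega | ring
  · intro k _ hk
    rw [if_neg (by omega)]
  · intro h
    rw [if_neg (by simp at hi h; omega)]

theorem constantCoeff_gaussSeries (z : ℝ × ℝ) : constantCoeff (gaussSeries z) = 1 := by
  rw [← coeff_zero_eq_constantCoeff_apply, coeff_gaussSeries]
  simp

theorem ssTerm_zero_left {d : ℕ} (Q1 Q2 Q3 : Fin d → ℝ) (Q4 Q5 : ℝ) (ρ2 : ℕ) :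
    ssTerm Q1 Q2 Q3 Q4 Q5 0 ρ2 = coeff ρ2 (gaussSeries (Q4, Q5)) := by
  have hbox : mIdxBox (0 : Fin d → ℕ) = {0} := by
    simp [mIdxBox, Fintype.piFinset_singleton, Pi.zero_def]
  simp only [ssTerm, hbox, Finset.sum_singleton, coeff_gaussSeries, add_zero, true_and]
  simp only [mdeg, Pi.zero_apply, sum_const_zero, zero_add, mfact, Nat.factorial_zero,
    prod_const_one, Nat.cast_one, mul_one, one_mul, one_div, mul_inv_rev, mpow, pow_zero]
  refine sum_congr rfl fun _ _ => sum_congr rfl fun _ _ => ?_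
  split_ifs <;> ring

def twistDeriv (z : ℝ × ℝ) (w : Polynomial ℝ) : Polynomial ℝ :=
  Polynomial.derivative w + gaussRate z * w

theorem natDegree_gaussRate_le (z : ℝ × ℝ) : (gaussRate z).natDegree ≤ 1 :=
  Polynomial.natDegree_linear_le

theorem gaussRate_ne_zero {z : ℝ × ℝ} (hz : z ≠ 0) : gaussRate z ≠ 0 := by
  intro h
  have h0 := congrArg (Polynomial.coeff · 0) h
  have h1 := congrArg (Polynomial.coeff · 1) h
  simp [gaussRate] at h0 h1
  exact hz (Prod.ext h0 h1)

theorem natDegree_twistDeriv_le (z : ℝ × ℝ) (w : Polynomial ℝ) :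
    (twistDeriv z w).natDegree ≤ w.natDegree + 1 := by
  refine (Polynomial.natDegree_add_le _ _).trans <| max_le ?_ ?_
  · exact (Polynomial.natDegree_derivative_le w).trans (by omega)
  · exact Polynomial.natDegree_mul_le.trans (by have := natDegree_gaussRate_le z; omega)

theorem twistDeriv_ne_zero {z : ℝ × ℝ} (hz : z ≠ 0) {w : Polynomial ℝ} (hw : w ≠ 0) :
    twistDeriv z w ≠ 0 := by
  intro h
  have hprod : gaussRate z * w ≠ 0 := mul_ne_zero (gaussRate_ne_zero hz) hw
  have hder : Polynomial.derivative w = -(gaussRate z * w) := eq_neg_of_add_eq_zero_left h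
  have hw0 : w.natDegree ≠ 0 := fun h0 =>
    hprod (neg_eq_zero.mp (hder ▸ Polynomial.derivative_of_natDegree_zero h0))
  have hlt := Polynomial.natDegree_derivative_lt hw0
  rw [hder, Polynomial.natDegree_neg, Polynomial.natDegree_mul (gaussRate_ne_zero hz) hw] at hlt
  omega

theorem natDegree_iterate_twistDeriv_le (z : ℝ × ℝ) (w : Polynomial ℝ) (t : ℕ) :
    ((twistDeriv z)^[t] w).natDegree ≤ w.natDegree + t := by
  induction t with
  | zero => simp
  | succ t ih =>
    rw [Function.iterate_succ_apply']
    exact (natDegree_twistDeriv_le z _).trans (by omega)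

theorem eq_zero_of_iterate_twistDeriv_eq_zero {z : ℝ × ℝ} (hz : z ≠ 0) {w : Polynomial ℝ}
    {t : ℕ} (h : (twistDeriv z)^[t] w = 0) : w = 0 := by
  induction t generalizing w with
  | zero => exact h
  | succ t ih =>
    by_contra hw
    exact twistDeriv_ne_zero hz hw (ih (by rwa [Function.iterate_succ_apply] at h))

theorem iterate_twistDeriv_zero_eq_zero {w : Polynomial ℝ} {t : ℕ} (ht : w.natDegree < t) :
    (twistDeriv 0)^[t] w = 0 := by
  have : twistDeriv 0 = Polynomial.derivative := by
    ext w : 1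
    simp [twistDeriv, gaussRate]
  rw [this]
  exact Polynomial.iterate_derivative_eq_zero ht

/-- `F ↦ F' - gaussRate z₀ * F`, which is `gaussSeries z₀ * d⁄dX (F / gaussSeries z₀)`. -/
def twistDerivSeries (z₀ : ℝ × ℝ) : ℝ⟦X⟧ →ₗ[ℝ] ℝ⟦X⟧ :=
  (d⁄dX ℝ).toLinearMap - LinearMap.mulLeft ℝ (gaussRate z₀ : ℝ⟦X⟧)

theorem twistDerivSeries_coe_mul_gaussSeries (z₀ z : ℝ × ℝ) (w : Polynomial ℝ) :
    twistDerivSeries z₀ ((w : ℝ⟦X⟧) * gaussSeries z) =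
      (twistDeriv (z - z₀) w : ℝ⟦X⟧) * gaussSeries z := by
  simp only [twistDerivSeries, LinearMap.sub_apply, Derivation.coeFn_coe,
    LinearMap.mulLeft_apply, Derivation.leibniz, derivative_gaussSeries, derivative_coe,
    twistDeriv, gaussRate, smul_eq_mul, Polynomial.coe_add, Polynomial.coe_mul, Polynomial.coe_C,
    Polynomial.coe_X, Polynomial.coe_sub, Prod.fst_sub, Prod.snd_sub, map_sub, mul_sub]
  ring

theorem X_pow_dvd_twistDerivSeries {K : ℕ} {F : ℝ⟦X⟧} (h : X ^ (K + 1) ∣ F) (z₀ : ℝ × ℝ) :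
    X ^ K ∣ twistDerivSeries z₀ F := by
  refine dvd_sub ?_ (((pow_dvd_pow X K.le_succ).trans h).mul_left _)
  rw [X_pow_dvd_iff] at h ⊢
  intro n hn
  rw [Derivation.coeFn_coe, coeff_derivative, h (n + 1) (by omega), zero_mul]

theorem X_pow_dvd_sum_iterate_twistDeriv (z₀ : ℝ × ℝ) (S : Finset (ℝ × ℝ)) (t : ℕ) :
    ∀ (K : ℕ) (W : ℝ × ℝ → Polynomial ℝ),
      X ^ (K + t) ∣ ∑ z ∈ S, (W z : ℝ⟦X⟧) * gaussSeries z →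
      X ^ K ∣ ∑ z ∈ S, ((twistDeriv (z - z₀))^[t] (W z) : ℝ⟦X⟧) * gaussSeries z := by
  induction t with
  | zero => exact fun K W h => h
  | succ t ih =>
    intro K W h
    have := X_pow_dvd_twistDerivSeries (K := K + t) h z₀
    simp only [map_sum, twistDerivSeries_coe_mul_gaussSeries] at this
    simpa only [Function.iterate_succ_apply] using ih K (fun z => twistDeriv (z - z₀) (W z)) this

theorem eq_zero_of_X_pow_dvd_coe_mul_gaussSeries {K : ℕ} {w : Polynomial ℝ}
    (hw : w.natDegree < K) (z : ℝ × ℝ) (h : X ^ K ∣ (w : ℝ⟦X⟧) * gaussSeries z) : w = 0 := by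
  have h' := X_pow_dvd_iff.mp ((isUnit_gaussSeries z).dvd_mul_right.mp h)
  ext n
  rw [Polynomial.coeff_zero]
  rcases lt_or_ge n K with hn | hn
  · simpa using h' n hn
  · exact Polynomial.coeff_eq_zero_of_natDegree_lt (by omega)

theorem exists_forall_eq_zero_of_X_pow_dvd_sum_mul_gaussSeries (n D : ℕ) :
    ∃ K, ∀ (S : Finset (ℝ × ℝ)) (W : ℝ × ℝ → Polynomial ℝ), #S ≤ n →
      (∀ z ∈ S, (W z).natDegree ≤ D) →
      X ^ K ∣ ∑ z ∈ S, (W z : ℝ⟦X⟧) * gaussSeries z → ∀ z ∈ S, W z = 0 := by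
  induction n generalizing D with
  | zero =>
    exact ⟨0, fun S W hS _ _ => by simp [Finset.card_eq_zero.mp (Nat.le_zero.mp hS)]⟩
  | succ n ih =>
    obtain ⟨K, hK⟩ := ih (2 * D + 1)
    refine ⟨K + (D + 1), fun S W hS hdeg hdvd => ?_⟩
    rcases S.eq_empty_or_nonempty with rfl | ⟨z₀, hz₀⟩
    · simp
    have hrest : ∀ z ∈ S.erase z₀, W z = 0 := by
      have hdvd' := X_pow_dvd_sum_iterate_twistDeriv z₀ S (D + 1) K W hdvd
      rw [← Finset.add_sum_erase S _ hz₀, sub_self,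
        iterate_twistDeriv_zero_eq_zero (by have := hdeg z₀ hz₀; omega), Polynomial.coe_zero,
        zero_mul, zero_add] at hdvd'
      refine fun z hz => eq_zero_of_iterate_twistDeriv_eq_zero
        (sub_ne_zero.mpr (Finset.ne_of_mem_erase hz)) (hK _ _ ?_ ?_ hdvd' z hz)
      · rw [Finset.card_erase_of_mem hz₀]
        omega
      · intro z hz
        have := natDegree_iterate_twistDeriv_le (z - z₀) (W z) (D + 1)
        have := hdeg z (Finset.mem_of_mem_erase hz)
        omega
    have hz₀' : W z₀ = 0 := by
      rw [← Finset.add_sum_erase S _ hz₀, Finset.sum_eq_zero fun z hz => by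
        rw [hrest z hz, Polynomial.coe_zero, zero_mul], add_zero] at hdvd
      exact eq_zero_of_X_pow_dvd_coe_mul_gaussSeries (by have := hdeg z₀ hz₀; omega) z₀ hdvd
    intro z hz
    obtain rfl | hne := eq_or_ne z z₀
    · exact hz₀'
    · exact hrest z (Finset.mem_erase.mpr ⟨hne, hz⟩)

theorem X_pow_dvd_sum_sq_mul_gaussSeries_sub_one {m d r : ℕ} {p : Fin m → ℝ}
    {q1 : Fin m → Fin d → ℝ} {q2 : Fin d → ℝ} {q3 : Fin m → Fin d → ℝ} {q4 q5 : Fin m → ℝ}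
    (heq : ∀ ρ2, 1 ≤ ρ2 → ρ2 ≤ r → ssLHS p q1 q2 q3 q4 q5 0 ρ2 = 0) :
    X ^ (r + 1) ∣ ∑ i, C (p i ^ 2) * (gaussSeries (q4 i, q5 i) - 1) := by
  refine X_pow_dvd_iff.mpr fun n hn => ?_
  simp only [map_sum, coeff_C_mul, map_sub, coeff_one, mul_sub]
  rcases Nat.eq_zero_or_pos n with rfl | hn0
  · simp [coeff_zero_eq_constantCoeff_apply, constantCoeff_gaussSeries]
  · rw [if_neg hn0.ne', Finset.sum_sub_distrib]
    simp only [mul_zero, sum_const_zero, sub_zero]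
    rw [← heq n hn0 (by omega), ssLHS_eq_sum_ssTerm]
    simp only [ssTerm_zero_left]

theorem exists_not_ssHasNontrivial (m d : ℕ) : ∃ r, ¬ ssHasNontrivial m d r := by
  obtain ⟨K, hK⟩ := exists_forall_eq_zero_of_X_pow_dvd_sum_mul_gaussSeries (m + 1) 0
  refine ⟨K, fun ⟨p, q1, q2, q3, q4, q5, hp, ⟨i0, hi0⟩, heq⟩ => ?_⟩
  set pr : Fin m → ℝ × ℝ := fun i => (q4 i, q5 i)
  set S := insert 0 (univ.image pr)
  -- The weight of `z` is the total `p i ^ 2` of the blocks with exponent pair `z`, shifted at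
  -- `z = 0` to absorb the constant term.
  set W : ℝ × ℝ → Polynomial ℝ := fun z =>
    Polynomial.C ((∑ i with pr i = z, p i ^ 2) - if z = 0 then ∑ i, p i ^ 2 else 0)
  have hsum : ∑ z ∈ S, (W z : ℝ⟦X⟧) * gaussSeries z =
      ∑ i, C (p i ^ 2) * (gaussSeries (pr i) - 1) := by
    have hmaps : ∀ i ∈ univ, pr i ∈ S := fun i _ =>
      mem_insert_of_mem (mem_image_of_mem _ (mem_univ _))
    simp only [W, Polynomial.coe_C]
    simp only [map_sub, sub_mul, sum_sub_distrib, mul_sub, map_sum, sum_mul]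
    congr 1
    · rw [← Finset.sum_fiberwise_of_maps_to hmaps]
      refine sum_congr rfl fun z _ => sum_congr rfl fun i hi => ?_
      rw [(mem_filter.mp hi).2]
    · simp [apply_ite C, ite_mul, sum_ite_eq', S]
  have hdvd : X ^ K ∣ ∑ z ∈ S, (W z : ℝ⟦X⟧) * gaussSeries z := by
    rw [hsum]
    exact (pow_dvd_pow X K.le_succ).trans (X_pow_dvd_sum_sq_mul_gaussSeries_sub_one
      fun ρ2 h1 h2 => heq 0 ρ2 (by simpa [mdeg] using h1) (by simpa [mdeg] using h2))
  have hcard : #S ≤ m + 1 :=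
    (card_insert_le _ _).trans (by simpa using card_image_le (s := univ) (f := pr))
  have hW := hK S W hcard (fun z _ => (Polynomial.natDegree_C _).le) hdvd (pr i0)
    (mem_insert_of_mem (by simp))
  have hpr : pr i0 ≠ 0 := fun h => hi0 (congrArg Prod.fst h)
  simp only [W, if_neg hpr, sub_zero, Polynomial.C_eq_zero] at hW
  exact (Finset.sum_pos (fun i _ => pow_two_pos_of_ne_zero (hp i)) ⟨i0, by simp⟩).ne' hW

theorem rSS_mono_general (d : ℕ) (m m' : ℕ) (hmm : m ≤ m') :
    rSS m d ≤ rSS m' d := by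
  obtain ⟨r, hr⟩ := exists_not_ssHasNontrivial m' d
  have hm' : ¬ ssHasNontrivial m' d (rSS m' d) :=
    Nat.sInf_mem (s := {r | ¬ ssHasNontrivial m' d r}) ⟨r, hr⟩
  exact Nat.sInf_le fun h => hm' (h.of_le hmm)

/-- For every fixed dimension `d ≥ 1`, the function `m ↦ r^SS(m)` is monotonically
increasing: if `2 ≤ m ≤ m'` then `r^SS(m) ≤ r^SS(m')`. -/
theorem rSS_mono (d : ℕ) (hd : 1 ≤ d) (m m' : ℕ) (hm : 2 ≤ m) (hmm : m ≤ m') :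
    rSS m d ≤ rSS m' d :=
  rSS_mono_general d m m' hmm
end
end

section
/- Coordinatewise Lipschitz bound for the softmax: for every k ≥ 1, every i ∈ {1,…,k}, and all v, w ∈ ℝ^k, |σ_i(v) − σ_i(w)| ≤ max_{1 ≤ j ≤ k} |v_j − w_j|. -/
/-!
Along the segment `t ↦ w + t • u` with `u = v - w`, the derivative of `σᵢ` is
`σᵢ (uᵢ - ∑ⱼ σⱼ uⱼ) = σᵢ ∑_{j ≠ i} σⱼ (uᵢ - uⱼ)`, whose absolute value is at most
`σᵢ (1 - σᵢ) · 2 maxⱼ |uⱼ| ≤ maxⱼ |uⱼ| / 2`. The mean value inequality then bounds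
`|σᵢ(v) - σᵢ(w)|` by half the sup-distance of `v` and `w`.
-/

open Real Finset

noncomputable def softmax {ι : Type*} [Fintype ι] (v : ι → ℝ) (i : ι) : ℝ :=
  exp (v i) / ∑ j, exp (v j)

section

variable {ι : Type*} [Fintype ι]

theorem sum_exp_pos [Nonempty ι] (v : ι → ℝ) : 0 < ∑ j, exp (v j) :=
  sum_pos (fun j _ => exp_pos (v j)) univ_nonempty

theorem softmax_nonneg (v : ι → ℝ) (i : ι) : 0 ≤ softmax v i := by
  unfold softmax
  positivity

theorem sum_softmax [Nonempty ι] (v : ι → ℝ) : ∑ i, softmax v i = 1 := by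
  simp only [softmax, ← sum_div, div_self (sum_exp_pos v).ne']

theorem abs_sub_sum_mul_le {p u : ι → ℝ} {M : ℝ} (hp : ∀ j, 0 ≤ p j)
    (hp_sum : ∑ j, p j = 1) (hu : ∀ j, |u j| ≤ M) (i : ι) :
    |u i - ∑ j, p j * u j| ≤ 2 * M * (1 - p i) := by
  classical
  have h_eq : u i - ∑ j, p j * u j = ∑ j ∈ univ.erase i, p j * (u i - u j) := by
    rw [sum_erase _ (by rw [sub_self, mul_zero]), sum_congr rfl fun j _ => mul_sub (p j) _ _,
      sum_sub_distrib, ← sum_mul, hp_sum, one_mul]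
  have h_diff (j : ι) : |u i - u j| ≤ 2 * M := by
    linarith [abs_sub (u i) (u j), hu i, hu j]
  calc |u i - ∑ j, p j * u j|
      ≤ ∑ j ∈ univ.erase i, |p j * (u i - u j)| := h_eq ▸ abs_sum_le_sum_abs _ _
    _ ≤ ∑ j ∈ univ.erase i, 2 * M * p j := by
        refine sum_le_sum fun j _ => ?_
        rw [abs_mul, abs_of_nonneg (hp j), mul_comm]
        exact mul_le_mul_of_nonneg_right (h_diff j) (hp j)
    _ = 2 * M * (1 - p i) := by
        rw [← mul_sum, sum_erase_eq_sub (mem_univ i), hp_sum]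

theorem hasDerivAt_softmax_add_smul (w u : ι → ℝ) (i : ι) (t : ℝ) :
    HasDerivAt (fun s => softmax (w + s • u) i)
      (softmax (w + t • u) i * (u i - ∑ j, softmax (w + t • u) j * u j)) t := by
  have : Nonempty ι := ⟨i⟩
  have h_exp (j : ι) : HasDerivAt (fun s => exp (w j + s * u j))
      (exp (w j + t * u j) * u j) t :=
    (((hasDerivAt_id t).mul_const (u j)).const_add (w j)).exp.congr_deriv (by simp)
  have h_sum := HasDerivAt.fun_sum fun j (_ : j ∈ univ) => h_exp j
  have h_pos := sum_exp_pos fun j => w j + t * u j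
  have h_fun : (fun s => softmax (w + s • u) i) =
      fun s => exp (w i + s * u i) / ∑ j, exp (w j + s * u j) := by
    funext s
    simp only [softmax, Pi.add_apply, Pi.smul_apply, smul_eq_mul]
  rw [h_fun]
  refine ((h_exp i).div h_sum h_pos.ne').congr_deriv ?_
  simp only [softmax, Pi.add_apply, Pi.smul_apply, smul_eq_mul, div_mul_eq_mul_div, ← sum_div]
  field_simp

theorem abs_softmax_sub_le {v w : ι → ℝ} {M : ℝ} (hM : ∀ j, |v j - w j| ≤ M) (i : ι) :
    |softmax v i - softmax w i| ≤ M / 2 := by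
  have : Nonempty ι := ⟨i⟩
  have hM_nonneg : 0 ≤ M := (abs_nonneg _).trans (hM i)
  set u := v - w
  have h_deriv_le (t : ℝ) :
      ‖softmax (w + t • u) i * (u i - ∑ j, softmax (w + t • u) j * u j)‖ ≤ M / 2 := by
    set σ := softmax (w + t • u)
    have h_avg := abs_sub_sum_mul_le (p := σ) (u := u) (softmax_nonneg _) (sum_softmax _) hM i
    rw [Real.norm_eq_abs, abs_mul, abs_of_nonneg (softmax_nonneg _ i)]
    -- `σᵢ (1 - σᵢ) ≤ 1 / 4`
    nlinarith [mul_le_mul_of_nonneg_left h_avg (softmax_nonneg (w + t • u) i),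
      mul_nonneg hM_nonneg (sq_nonneg (2 * σ i - 1))]
  have h_mvt := norm_image_sub_le_of_norm_deriv_le_segment_01'
    (fun t _ => (hasDerivAt_softmax_add_smul w u i t).hasDerivWithinAt) fun t _ => h_deriv_le t
  simpa [u] using h_mvt

end

theorem softmax_coord_lipschitz_general (k : ℕ) (i : Fin k) (v w : Fin k → ℝ) :
    |Real.exp (v i) / (∑ j, Real.exp (v j)) -
        Real.exp (w i) / (∑ j, Real.exp (w j))| ≤
      Finset.univ.sup' ⟨i, Finset.mem_univ i⟩ (fun j => |v j - w j|) := by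
  set M := univ.sup' ⟨i, mem_univ i⟩ fun j => |v j - w j|
  have hM (j : Fin k) : |v j - w j| ≤ M := le_sup' (fun j => |v j - w j|) (mem_univ j)
  have hM_nonneg : 0 ≤ M := (abs_nonneg _).trans (hM i)
  calc |softmax v i - softmax w i| ≤ M / 2 := abs_softmax_sub_le hM i
    _ ≤ M := by linarith

/-- Coordinatewise Lipschitz bound for the softmax: for every `k ≥ 1`, `i ∈ [k]` and
`v, w ∈ ℝᵏ`, `|σᵢ(v) − σᵢ(w)| ≤ max_j |v_j − w_j|`, where
`σᵢ(v) = exp(vᵢ)/∑ⱼ exp(vⱼ)`. -/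
theorem softmax_coord_lipschitz (k : ℕ) (hk : 1 ≤ k) (i : Fin k) (v w : Fin k → ℝ) :
    |Real.exp (v i) / (∑ j, Real.exp (v j)) -
        Real.exp (w i) / (∑ j, Real.exp (w j))| ≤
      Finset.univ.sup' ⟨i, Finset.mem_univ i⟩ (fun j => |v j - w j|) :=
  softmax_coord_lipschitz_general k i v w
end
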